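/- arXiv:1706.05502 — 7 statements merged into one kernel-verified Lean document; each statement's English description precedes it below -/
import Mathlib

section
/- The Fermat equation z0^p + z1^p + z2^p = 0 with p ≥ 3 has no solution in coprime, not all constant polynomials z0, z1, z2 ∈ ℂ[x]. -/
open Polynomial

/-!
The three polynomials are pairwise coprime, since a common factor of two of them has its `p`-th
power dividing the `p`-th power of the third. If one of them vanishes, the other two have opposite
`p`-th powers and are therefore units. Otherwise the Fermat–Catalan theorem for polynomials, a
consequence of the Mason–Stothers theorem, forces all three to be constant.
-/

theorem isCoprime_of_pow_add_pow_add_pow_eq_zero {R : Type*} [CommRing R] [IsDomain R]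
    [IsPrincipalIdealRing R] {n : ℕ} (hn : n ≠ 0) {a b c : R} (h : a ^ n + b ^ n + c ^ n = 0)
    (hrel : ∀ d : R, d ∣ a → d ∣ b → d ∣ c → IsUnit d) : IsCoprime a b := by
  refine IsRelPrime.isCoprime fun d hda hdb ↦ hrel d hda hdb ?_
  have hcn : c ^ n = -(a ^ n + b ^ n) := by linear_combination h
  have hdc : d ^ n ∣ c ^ n := hcn ▸ (dvd_add (pow_dvd_pow_of_dvd hda n)
    (pow_dvd_pow_of_dvd hdb n)).neg_right
  exact (UniqueFactorizationMonoid.pow_dvd_pow_iff_dvd hn).mp hdc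

theorem IsCoprime.isUnit_of_pow_add_pow_eq_zero {R : Type*} [CommRing R] {n : ℕ} (hn : n ≠ 0)
    {a b : R} (hab : IsCoprime a b) (h : a ^ n + b ^ n = 0) : IsUnit a := by
  have hbn : b ^ n = -a ^ n := by linear_combination h
  exact hab.pow_right.isUnit_of_dvd' dvd_rfl (hbn ▸ (dvd_pow_self a hn).neg_right)

theorem Polynomial.natDegree_eq_zero_of_pow_add_pow_add_pow_eq_zero {k : Type*} [Field k]
    {n : ℕ} (hn : 3 ≤ n) (chn : (n : k) ≠ 0) {a b c : k[X]} (hab : IsCoprime a b)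
    (hca : IsCoprime c a) (h : a ^ n + b ^ n + c ^ n = 0) : a.natDegree = 0 := by
  have hn0 : n ≠ 0 := by omega
  rcases eq_or_ne b 0 with rfl | hb
  · exact natDegree_eq_zero_of_isUnit <|
      hca.symm.isUnit_of_pow_add_pow_eq_zero hn0 (by simpa [zero_pow hn0] using h)
  rcases eq_or_ne c 0 with rfl | hc
  · exact natDegree_eq_zero_of_isUnit <|
      hab.isUnit_of_pow_add_pow_eq_zero hn0 (by simpa [zero_pow hn0] using h)
  rcases eq_or_ne a 0 with rfl | ha
  · exact natDegree_zero
  have hineq : n * n + n * n + n * n ≤ n * n * n := by nlinarith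
  refine (flt_catalan hn0 hn0 hn0 hineq chn chn chn ha hb hc hab one_ne_zero one_ne_zero
    one_ne_zero ?_).1
  simpa only [map_one, one_mul] using h

/-- The Fermat equation `z0^p + z1^p + z2^p = 0`, `p ≥ 3`, has no solution in
coprime, not all constant polynomials over `ℂ`. -/
theorem fermat_no_polynomial_solution (p : ℕ) (hp : 3 ≤ p)
    (z0 z1 z2 : ℂ[X])
    (hcop : ∀ d : ℂ[X], d ∣ z0 → d ∣ z1 → d ∣ z2 → IsUnit d)
    (hnc : ¬ (z0.natDegree = 0 ∧ z1.natDegree = 0 ∧ z2.natDegree = 0)) :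
    z0 ^ p + z1 ^ p + z2 ^ p ≠ 0 := by
  intro h
  have hp0 : p ≠ 0 := by omega
  have chp : (p : ℂ) ≠ 0 := Nat.cast_ne_zero.mpr hp0
  have h12 : z1 ^ p + z2 ^ p + z0 ^ p = 0 := by linear_combination h
  have h20 : z2 ^ p + z0 ^ p + z1 ^ p = 0 := by linear_combination h
  have hc01 : IsCoprime z0 z1 := isCoprime_of_pow_add_pow_add_pow_eq_zero hp0 h hcop
  have hc12 : IsCoprime z1 z2 := isCoprime_of_pow_add_pow_add_pow_eq_zero hp0 h12
    fun d h1 h2 h0 ↦ hcop d h0 h1 h2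
  have hc20 : IsCoprime z2 z0 := isCoprime_of_pow_add_pow_add_pow_eq_zero hp0 h20
    fun d h2 h0 h1 ↦ hcop d h0 h1 h2
  exact hnc ⟨natDegree_eq_zero_of_pow_add_pow_add_pow_eq_zero hp chp hc01 hc20 h,
    natDegree_eq_zero_of_pow_add_pow_add_pow_eq_zero hp chp hc12 hc01 h12,
    natDegree_eq_zero_of_pow_add_pow_add_pow_eq_zero hp chp hc20 hc12 h20⟩
end

section
/- Let p, q, r ≥ 2 be integers with gcd(p,r) = gcd(q,r) = 1. If there exist positive integers u, v with v·r - u·p·q = 1 and l(x) ∈ ℂ[x] satisfies (x^r+1)^p + (ε(2x^r+1))^q + x^r·l(x) = 0 where ε^q = -1, then z0 = l(x)^{uq}(x^r+1), z1 = ε·l(x)^{up}(2x^r+1), z2 = l(x)^v·x satisfy z0^p + z1^q + z2^r = 0. -/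
open Polynomial

/-- Since `v * r = u * p * q + 1`, all three rescaled terms pick up the common factor `l ^ (u * p * q)`,
and the extra `l` in the last one is exactly the `l` of the given relation. -/
theorem pow_add_pow_add_pow_eq_zero_of_rescale {R : Type*} [CommRing R] {p q r u v : ℕ}
    (huv : v * r = u * p * q + 1) {a b c l : R} (h : a ^ p + b ^ q + c ^ r * l = 0) :
    (l ^ (u * q) * a) ^ p + (l ^ (u * p) * b) ^ q + (l ^ v * c) ^ r = 0 := by
  have hp : (l ^ (u * q)) ^ p = l ^ (u * p * q) := by rw [← pow_mul, mul_right_comm]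
  have hq : (l ^ (u * p)) ^ q = l ^ (u * p * q) := by rw [← pow_mul]
  have hr : (l ^ v) ^ r = l ^ (u * p * q) * l := by rw [← pow_mul, huv, pow_succ]
  simp only [mul_pow, hp, hq, hr]
  linear_combination l ^ (u * p * q) * h

theorem horizontal_curve_coprime_case_general (p q r u v : ℕ)
    (huv : v * r = u * p * q + 1)
    (ε : ℂ) (l : ℂ[X])
    (hl : (X ^ r + 1) ^ p + (C ε * (2 * X ^ r + 1)) ^ q + X ^ r * l = 0) :
    (l ^ (u * q) * (X ^ r + 1)) ^ p
      + (C ε * l ^ (u * p) * (2 * X ^ r + 1)) ^ q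
      + (l ^ v * X) ^ r = 0 := by
  linear_combination pow_add_pow_add_pow_eq_zero_of_rescale huv hl

/-- Given `vr - upq = 1`, `ε^q = -1` and `(x^r+1)^p + (ε(2x^r+1))^q + x^r l = 0`,
the polynomials `z0 = l^{uq}(x^r+1)`, `z1 = ε l^{up}(2x^r+1)`, `z2 = l^v x`
satisfy `z0^p + z1^q + z2^r = 0`. -/
theorem horizontal_curve_coprime_case (p q r u v : ℕ)
    (hp : 2 ≤ p) (hq : 2 ≤ q) (hr : 2 ≤ r)
    (hpr : Nat.Coprime p r) (hqr : Nat.Coprime q r)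
    (hu : 0 < u) (hv : 0 < v) (huv : v * r = u * p * q + 1)
    (ε : ℂ) (hε : ε ^ q = -1) (l : ℂ[X])
    (hl : (X ^ r + 1) ^ p + (C ε * (2 * X ^ r + 1)) ^ q + X ^ r * l = 0) :
    (l ^ (u * q) * (X ^ r + 1)) ^ p
      + (C ε * l ^ (u * p) * (2 * X ^ r + 1)) ^ q
      + (l ^ v * X) ^ r = 0 :=
  horizontal_curve_coprime_case_general p q r u v huv ε l hl
end

section
/- Let p1, q1, r1 be pairwise coprime positive integers and suppose u1 p1 - v1 q1 r1 = 1, u2 q1 - v2 p1 r1 = 1, u3 r1 - v3 p1 q1 = 1 for positive integers u_i, v_i. If polynomials l0, l1, l2, w0, w1, w2 ∈ ℂ[x] satisfy l0² w0^{2p1} + l1² w1^{2q1} + l2² w2^{2r1} = 0, then z0 = l0^{u1} l1^{v2 r1} l2^{v3 q1} w0, z1 = l0^{v1 r1} l1^{u2} l2^{v3 p1} w1, z2 = l0^{v1 q1} l1^{v2 p1} l2^{u3} w2 satisfy z0^{2p1} + z1^{2q1} + z2^{2r1} = 0. -/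
open Polynomial

/-- Twisting a solution of `l0² w0^{2p1} + l1² w1^{2q1} + l2² w2^{2r1} = 0` by
Bézout exponents yields a solution of `z0^{2p1} + z1^{2q1} + z2^{2r1} = 0`. -/
theorem horizontal_curve_even_case (p1 q1 r1 u1 u2 u3 v1 v2 v3 : ℕ)
    (hp1 : 0 < p1) (hq1 : 0 < q1) (hr1 : 0 < r1)
    (hpq : Nat.Coprime p1 q1) (hpr : Nat.Coprime p1 r1) (hqr : Nat.Coprime q1 r1)
    (hu1 : 0 < u1) (hu2 : 0 < u2) (hu3 : 0 < u3)
    (hv1 : 0 < v1) (hv2 : 0 < v2) (hv3 : 0 < v3)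
    (h1 : u1 * p1 = v1 * q1 * r1 + 1)
    (h2 : u2 * q1 = v2 * p1 * r1 + 1)
    (h3 : u3 * r1 = v3 * p1 * q1 + 1)
    (l0 l1 l2 w0 w1 w2 : ℂ[X])
    (hrel : l0 ^ 2 * w0 ^ (2 * p1) + l1 ^ 2 * w1 ^ (2 * q1) + l2 ^ 2 * w2 ^ (2 * r1) = 0) :
    (l0 ^ u1 * l1 ^ (v2 * r1) * l2 ^ (v3 * q1) * w0) ^ (2 * p1)
      + (l0 ^ (v1 * r1) * l1 ^ u2 * l2 ^ (v3 * p1) * w1) ^ (2 * q1)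
      + (l0 ^ (v1 * q1) * l1 ^ (v2 * p1) * l2 ^ u3 * w2) ^ (2 * r1) = 0 := by
  set M := l0 ^ (2 * (v1 * q1 * r1)) * l1 ^ (2 * (v2 * p1 * r1)) * l2 ^ (2 * (v3 * p1 * q1)) with hM
  have E0 : (l0 ^ u1 * l1 ^ (v2 * r1) * l2 ^ (v3 * q1) * w0) ^ (2 * p1)
      = M * (l0 ^ 2 * w0 ^ (2 * p1)) := by
    rw [mul_pow, mul_pow, mul_pow, ← pow_mul, ← pow_mul, ← pow_mul,
      show u1 * (2 * p1) = 2 * (v1 * q1 * r1) + 2 by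
        rw [show u1 * (2 * p1) = 2 * (u1 * p1) by ring, h1]; ring,
      show v2 * r1 * (2 * p1) = 2 * (v2 * p1 * r1) by ring,
      show v3 * q1 * (2 * p1) = 2 * (v3 * p1 * q1) by ring, pow_add, hM]
    ring
  have E1 : (l0 ^ (v1 * r1) * l1 ^ u2 * l2 ^ (v3 * p1) * w1) ^ (2 * q1)
      = M * (l1 ^ 2 * w1 ^ (2 * q1)) := by
    rw [mul_pow, mul_pow, mul_pow, ← pow_mul, ← pow_mul, ← pow_mul,
      show u2 * (2 * q1) = 2 * (v2 * p1 * r1) + 2 by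
        rw [show u2 * (2 * q1) = 2 * (u2 * q1) by ring, h2]; ring,
      show v1 * r1 * (2 * q1) = 2 * (v1 * q1 * r1) by ring,
      show v3 * p1 * (2 * q1) = 2 * (v3 * p1 * q1) by ring, pow_add, hM]
    ring
  have E2 : (l0 ^ (v1 * q1) * l1 ^ (v2 * p1) * l2 ^ u3 * w2) ^ (2 * r1)
      = M * (l2 ^ 2 * w2 ^ (2 * r1)) := by
    rw [mul_pow, mul_pow, mul_pow, ← pow_mul, ← pow_mul, ← pow_mul,
      show u3 * (2 * r1) = 2 * (v3 * p1 * q1) + 2 by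
        rw [show u3 * (2 * r1) = 2 * (u3 * r1) by ring, h3]; ring,
      show v1 * q1 * (2 * r1) = 2 * (v1 * q1 * r1) by ring,
      show v2 * p1 * (2 * r1) = 2 * (v2 * p1 * r1) by ring, pow_add, hM]
    ring
  rw [E0, E1, E2, ← mul_add, ← mul_add, hrel, mul_zero]
end

section
/- Let a(x), b(x) ∈ ℂ[x] be nonconstant with a + b + 1 = 0, and write a = ∏_j T_{1j}^{l_{1j}}, b = ∏_j T_{2j}^{l_{2j}} with m_{ij} the number of distinct roots of T_{ij}. Then Σ_j m_{1j}(l_{1j} - 2) + Σ_j m_{2j}(l_{2j} - 2) ≤ -2. -/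
/-!
Mason–Stothers applied to `a + b + 1 = 0` bounds both `deg a` and `deg b` strictly by the number
`S = Σ m_{1j} + Σ m_{2j}` of distinct roots of `a b`, counted through the `T_{ij}`. On the other
hand `deg a = Σ l_{1j} deg T_{1j} ≥ Σ l_{1j} m_{1j}`, and likewise for `b`; adding the two bounds
gives `Σ m_{1j} l_{1j} + Σ m_{2j} l_{2j} + 2 ≤ 2 S`, which is the claim.
-/

open Polynomial UniqueFactorizationMonoid

namespace Polynomial

variable {R : Type*} [CommRing R] [IsDomain R] [DecidableEq R]

theorem card_roots_toFinset_mul_le (p q : R[X]) :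
    (p * q).roots.toFinset.card ≤ p.roots.toFinset.card + q.roots.toFinset.card := by
  rcases eq_or_ne (p * q) 0 with hpq | hpq
  · simp [hpq]
  · rw [roots_mul hpq, Multiset.toFinset_add]
    exact Finset.card_union_le _ _

theorem card_roots_toFinset_pow_le (p : R[X]) (n : ℕ) :
    (p ^ n).roots.toFinset.card ≤ p.roots.toFinset.card := by
  refine Finset.card_le_card fun x hx => ?_
  rw [roots_pow, Multiset.mem_toFinset] at hx
  exact Multiset.mem_toFinset.mpr (Multiset.mem_of_mem_nsmul hx)

theorem card_roots_toFinset_prod_pow_le {ι : Type*} (s : Finset ι) (f : ι → R[X]) (l : ι → ℕ) :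
    (∏ i ∈ s, f i ^ l i).roots.toFinset.card ≤ ∑ i ∈ s, (f i).roots.toFinset.card := by
  classical
  induction s using Finset.induction_on with
  | empty => simp
  | insert i s hi ih =>
    rw [Finset.prod_insert hi, Finset.sum_insert hi]
    exact (card_roots_toFinset_mul_le _ _).trans (add_le_add (card_roots_toFinset_pow_le _ _) ih)

theorem sum_card_roots_toFinset_mul_le_natDegree_prod_pow {ι : Type*} {s : Finset ι}
    {f : ι → R[X]} {l : ι → ℕ} (h : ∏ i ∈ s, f i ^ l i ≠ 0) :
    ∑ i ∈ s, (f i).roots.toFinset.card * l i ≤ (∏ i ∈ s, f i ^ l i).natDegree := by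
  rw [natDegree_prod _ _ fun i hi => Finset.prod_ne_zero_iff.mp h i hi]
  refine Finset.sum_le_sum fun i _ => ?_
  rw [natDegree_pow, mul_comm]
  exact Nat.mul_le_mul_left _ ((Multiset.toFinset_card_le _).trans (card_roots' _))

theorem natDegree_radical_le_card_roots_toFinset {k : Type*} [Field k] [IsAlgClosed k]
    [DecidableEq k] {p : k[X]} (hp : p ≠ 0) :
    (radical p).natDegree ≤ p.roots.toFinset.card := by
  have hsep : (radical p).Separable :=
    PerfectField.separable_iff_squarefree.mpr squarefree_radical
  calc (radical p).natDegree = (radical p).roots.toFinset.card := by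
        rw [Multiset.toFinset_card_of_nodup (nodup_roots hsep), IsAlgClosed.card_roots_eq_natDegree]
    _ ≤ p.roots.toFinset.card :=
        Finset.card_le_card (Multiset.toFinset_subset.mpr
          (Multiset.subset_of_le (roots.le_of_dvd hp radical_dvd_self)))

theorem natDegree_lt_natDegree_radical_of_add_add_one_eq_zero {k : Type*} [Field k] [CharZero k]
    [DecidableEq k] {a b : k[X]} (ha : 0 < a.natDegree) (hab : a + b + 1 = 0) :
    a.natDegree < (radical (a * b)).natDegree ∧ b.natDegree < (radical (a * b)).natDegree := by
  have ha0 : a ≠ 0 := ne_zero_of_natDegree_gt ha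
  have hb0 : b ≠ 0 := by
    rintro rfl
    rw [add_zero, add_eq_zero_iff_eq_neg] at hab
    simp [hab] at ha
  have hcop : IsCoprime a b := ⟨-1, -1, by linear_combination -hab⟩
  rcases Polynomial.abc ha0 hb0 one_ne_zero hcop hab with ⟨hA, hB, -⟩ | ⟨hda, -, -⟩
  · rw [mul_one] at hA hB
    exact ⟨hA, hB⟩
  · exact absurd (derivative_eq_zero.mp hda) ha.ne'

end Polynomial

theorem Finset.sum_natCast_mul_sub_two {ι : Type*} (s : Finset ι) (m l : ι → ℕ) :
    ∑ i ∈ s, (m i : ℤ) * ((l i : ℤ) - 2) =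
      ((∑ i ∈ s, m i * l i : ℕ) : ℤ) - 2 * (∑ i ∈ s, m i : ℕ) := by
  push_cast
  rw [Finset.mul_sum, ← Finset.sum_sub_distrib]
  exact Finset.sum_congr rfl fun i _ => by ring

theorem type1_abc_inequality_general (n1 n2 : ℕ)
    (l1 : Fin n1 → ℕ) (l2 : Fin n2 → ℕ)
    (T1 : Fin n1 → ℂ[X]) (T2 : Fin n2 → ℂ[X])
    (a b : ℂ[X])
    (ha : a = ∏ j, T1 j ^ l1 j) (hb : b = ∏ j, T2 j ^ l2 j)
    (hanc : 0 < a.natDegree)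
    (habc : a + b + 1 = 0) :
    (∑ j, ((T1 j).roots.toFinset.card : ℤ) * ((l1 j : ℤ) - 2))
      + (∑ j, ((T2 j).roots.toFinset.card : ℤ) * ((l2 j : ℤ) - 2)) ≤ -2 := by
  subst ha hb
  obtain ⟨hA, hB⟩ := natDegree_lt_natDegree_radical_of_add_add_one_eq_zero hanc habc
  have hab0 := ne_zero_of_natDegree_gt (hA.trans_le natDegree_radical_le)
  have hrad := (natDegree_radical_le_card_roots_toFinset hab0).trans
    ((card_roots_toFinset_mul_le _ _).trans (add_le_add
      (card_roots_toFinset_prod_pow_le Finset.univ T1 l1)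
      (card_roots_toFinset_prod_pow_le Finset.univ T2 l2)))
  have hdeg1 := sum_card_roots_toFinset_mul_le_natDegree_prod_pow (left_ne_zero_of_mul hab0)
  have hdeg2 := sum_card_roots_toFinset_mul_le_natDegree_prod_pow (right_ne_zero_of_mul hab0)
  rw [Finset.sum_natCast_mul_sub_two, Finset.sum_natCast_mul_sub_two]
  omega

/-- If `a + b + 1 = 0` with `a, b` nonconstant products `∏ T_{1j}^{l_{1j}}`,
`∏ T_{2j}^{l_{2j}}` and `m_{ij}` the number of distinct roots of `T_{ij}`, then
`Σ m_{1j}(l_{1j}-2) + Σ m_{2j}(l_{2j}-2) ≤ -2`. -/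
theorem type1_abc_inequality (n1 n2 : ℕ)
    (l1 : Fin n1 → ℕ) (l2 : Fin n2 → ℕ)
    (hl1 : ∀ j, 0 < l1 j) (hl2 : ∀ j, 0 < l2 j)
    (T1 : Fin n1 → ℂ[X]) (T2 : Fin n2 → ℂ[X])
    (a b : ℂ[X])
    (ha : a = ∏ j, T1 j ^ l1 j) (hb : b = ∏ j, T2 j ^ l2 j)
    (hanc : 0 < a.natDegree) (hbnc : 0 < b.natDegree)
    (habc : a + b + 1 = 0) :
    (∑ j, ((T1 j).roots.toFinset.card : ℤ) * ((l1 j : ℤ) - 2))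
      + (∑ j, ((T2 j).roots.toFinset.card : ℤ) * ((l2 j : ℤ) - 2)) ≤ -2 :=
  type1_abc_inequality_general n1 n2 l1 l2 T1 T2 a b ha hb hanc habc
end

section
/- Let polynomials z0, z1, z2 ∈ ℂ[x], not all constant and pairwise coprime, satisfy z0^p + z1^q + z2^r = 0 with p ≥ q ≥ r ≥ 2. Then 1/p + 1/q + 1/r > 1. -/
open Polynomial UniqueFactorizationMonoid UniqueFactorizationDomain

private lemma unit_of_pow_add_pow {a b : ℂ[X]} {m n : ℕ} (hm : 0 < m) (hn : 0 < n)
    (hab : IsCoprime a b) (h : a ^ m + b ^ n = 0) : IsUnit a ∧ IsUnit b := by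
  have ha : a ∣ b ^ n := by
    have hx : a ^ m = -b ^ n := by linear_combination h
    have hd : a ∣ a ^ m := dvd_pow_self a hm.ne'
    rw [hx] at hd
    exact dvd_neg.mp hd
  have hb : b ∣ a ^ m := by
    have hx : b ^ n = -a ^ m := by linear_combination h
    have hd : b ∣ b ^ n := dvd_pow_self b hn.ne'
    rw [hx] at hd
    exact dvd_neg.mp hd
  exact ⟨(hab.pow_right (n := n)).isUnit_of_dvd' dvd_rfl ha,
    (hab.symm.pow_right (n := m)).isUnit_of_dvd' dvd_rfl hb⟩

/-- Halphen's theorem: if pairwise coprime polynomials `z0, z1, z2`, not all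
constant, satisfy `z0^p + z1^q + z2^r = 0` with `p ≥ q ≥ r ≥ 2`, then
`1/p + 1/q + 1/r > 1`. -/
theorem halphen (p q r : ℕ) (hpq : q ≤ p) (hqr : r ≤ q) (hr : 2 ≤ r)
    (z0 z1 z2 : ℂ[X])
    (h01 : IsCoprime z0 z1) (h02 : IsCoprime z0 z2) (h12 : IsCoprime z1 z2)
    (hnc : ¬ (z0.natDegree = 0 ∧ z1.natDegree = 0 ∧ z2.natDegree = 0))
    (hrel : z0 ^ p + z1 ^ q + z2 ^ r = 0) :
    (1 : ℚ) / p + 1 / q + 1 / r > 1 := by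
  classical
  have hr0 : 0 < r := by omega
  have hq0 : 0 < q := by omega
  have hp0 : 0 < p := by omega
  -- none of z0, z1, z2 is zero
  have hz0 : z0 ≠ 0 := by
    rintro rfl
    have h' : z1 ^ q + z2 ^ r = 0 := by simpa [zero_pow hp0.ne'] using hrel
    obtain ⟨h1, h2⟩ := unit_of_pow_add_pow hq0 hr0 h12 h'
    exact hnc ⟨by simp, natDegree_eq_zero_of_isUnit h1, natDegree_eq_zero_of_isUnit h2⟩
  have hz1 : z1 ≠ 0 := by
    rintro rfl
    have h' : z0 ^ p + z2 ^ r = 0 := by simpa [zero_pow hq0.ne'] using hrel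
    obtain ⟨h1, h2⟩ := unit_of_pow_add_pow hp0 hr0 h02 h'
    exact hnc ⟨natDegree_eq_zero_of_isUnit h1, by simp, natDegree_eq_zero_of_isUnit h2⟩
  have hz2 : z2 ≠ 0 := by
    rintro rfl
    have h' : z0 ^ p + z1 ^ q = 0 := by simpa [zero_pow hr0.ne'] using hrel
    obtain ⟨h1, h2⟩ := unit_of_pow_add_pow hp0 hq0 h01 h'
    exact hnc ⟨natDegree_eq_zero_of_isUnit h1, natDegree_eq_zero_of_isUnit h2, by simp⟩
  -- apply Mason-Stothers to a = z0^p, b = z1^q, c = z2^r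
  have habc := Polynomial.abc (pow_ne_zero p hz0) (pow_ne_zero q hz1) (pow_ne_zero r hz2)
    (h01.pow) hrel
  rcases habc with ⟨H0, H1, H2⟩ | ⟨d0, d1, d2⟩
  · -- main case
    rw [natDegree_pow] at H0 H1 H2
    set n0 := z0.natDegree
    set n1 := z1.natDegree
    set n2 := z2.natDegree
    have hradeq : radical (z0 ^ p * z1 ^ q * z2 ^ r) = radical (z0 * z1 * z2) := by
      rw [radical_mul ((h02.pow).mul_left (h12.pow)).isRelPrime, radical_mul (h01.pow).isRelPrime,
        radical_mul (h02.mul_left h12).isRelPrime, radical_mul h01.isRelPrime,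
        radical_pow _ hp0.ne', radical_pow _ hq0.ne', radical_pow _ hr0.ne']
    have hradle : (radical (z0 ^ p * z1 ^ q * z2 ^ r)).natDegree ≤ n0 + n1 + n2 := by
      rw [hradeq]
      calc (radical (z0 * z1 * z2)).natDegree
          ≤ (z0 * z1 * z2).natDegree :=
            Polynomial.natDegree_le_of_dvd (radical_dvd_self (a := _))
              (mul_ne_zero (mul_ne_zero hz0 hz1) hz2)
        _ = n0 + n1 + n2 := by
            rw [Polynomial.natDegree_mul (mul_ne_zero hz0 hz1) hz2,
              Polynomial.natDegree_mul hz0 hz1]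
    have hN0 : n0 + n1 + n2 ≠ 0 := by
      intro h
      exact hnc ⟨by omega, by omega, by omega⟩
    set N : ℕ := n0 + n1 + n2 with hN
    have b0 : p * n0 < N := lt_of_lt_of_le (by omega) hradle
    have b1 : q * n1 < N := lt_of_lt_of_le (by omega) hradle
    have b2 : r * n2 < N := lt_of_lt_of_le (by omega) hradle
    have hNQ : (0 : ℚ) < (N : ℚ) := by exact_mod_cast Nat.pos_of_ne_zero hN0
    have hNcast : (N : ℚ) = (n0 : ℚ) + n1 + n2 := by rw [hN]; push_cast; ring
    have c0 : (n0 : ℚ) / N < 1 / p := by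
      rw [div_lt_div_iff₀ hNQ (by exact_mod_cast hp0), one_mul]
      rw [mul_comm]; exact_mod_cast b0
    have c1 : (n1 : ℚ) / N < 1 / q := by
      rw [div_lt_div_iff₀ hNQ (by exact_mod_cast hq0), one_mul]
      rw [mul_comm]; exact_mod_cast b1
    have c2 : (n2 : ℚ) / N < 1 / r := by
      rw [div_lt_div_iff₀ hNQ (by exact_mod_cast hr0), one_mul]
      rw [mul_comm]; exact_mod_cast b2
    calc (1 : ℚ) = ((n0 : ℚ) + n1 + n2) / N := by rw [← hNcast, div_self hNQ.ne']
      _ = (n0 : ℚ) / N + (n1 : ℚ) / N + (n2 : ℚ) / N := by rw [add_div, add_div]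
      _ < 1 / p + 1 / q + 1 / r := add_lt_add (add_lt_add c0 c1) c2
  · -- derivatives are zero: contradiction with "not all constant"
    exfalso
    apply hnc
    have e0 : z0.natDegree = 0 := by
      have := natDegree_eq_zero_of_derivative_eq_zero d0
      rw [natDegree_pow] at this
      exact (Nat.mul_eq_zero.mp this).resolve_left hp0.ne' 
    have e1 : z1.natDegree = 0 := by
      have := natDegree_eq_zero_of_derivative_eq_zero d1
      rw [natDegree_pow] at this
      exact (Nat.mul_eq_zero.mp this).resolve_left hq0.ne' 
    have e2 : z2.natDegree = 0 := by
      have := natDegree_eq_zero_of_derivative_eq_zero d2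
      rw [natDegree_pow] at this
      exact (Nat.mul_eq_zero.mp this).resolve_left hr0.ne' 
    exact ⟨e0, e1, e2⟩
end

section
/- For every platonic triple (p, q, r) with p, q, r ≥ 2, there exist coprime nonconstant polynomials z0, z1, z2 ∈ ℂ[x] with z0^p + z1^q + z2^r = 0. -/
open Polynomial

def Sol (p q r : ℕ) : Prop :=
  ∃ z0 z1 z2 : ℂ[X],
      0 < z0.natDegree ∧ 0 < z1.natDegree ∧ 0 < z2.natDegree ∧
      (∀ d : ℂ[X], d ∣ z0 → d ∣ z1 → d ∣ z2 → IsUnit d) ∧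
      z0 ^ p + z1 ^ q + z2 ^ r = 0

lemma sol_p22 (p : ℕ) (hp : 1 ≤ p) : Sol p 2 2 := by
  obtain ⟨γ, hγ⟩ := IsAlgClosed.exists_pow_nat_eq (4 : ℂ) (n := p) (by omega)
  have hγ0 : γ ≠ 0 := by rintro rfl; simp [zero_pow (by omega : p ≠ 0)] at hγ
  refine ⟨C γ * X, X ^ p - 1, C Complex.I * (X ^ p + 1), ?_, ?_, ?_, ?_, ?_⟩
  · rw [natDegree_C_mul hγ0, natDegree_X]; norm_num
  · rw [show (X ^ p - 1 : ℂ[X]) = X ^ p - C 1 by simp, natDegree_X_pow_sub_C]; omega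
  · rw [natDegree_C_mul Complex.I_ne_zero,
      show (X ^ p + 1 : ℂ[X]) = X ^ p - C (-1) by simp [sub_neg_eq_add],
      natDegree_X_pow_sub_C]; omega
  · intro d h0 h1 _
    have hz : d ∣ C (4:ℂ) := by
      have h0p : d ∣ (C γ * X) ^ p := dvd_pow h0 (by omega)
      have := dvd_sub h0p (h1.mul_left (C 4))
      have e : (C γ * X) ^ p - C 4 * (X ^ p - 1) = C 4 := by
        rw [mul_pow, ← C_pow, hγ]; ring
      rwa [e] at this
    exact isUnit_of_dvd_unit hz (isUnit_C.2 (by norm_num))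
  · have hγ' : (C γ : ℂ[X]) ^ p = 4 := by rw [← C_pow, hγ]; exact map_ofNat C 4
    have hI : (C Complex.I : ℂ[X]) ^ 2 = -1 := by
      rw [← C_pow, Complex.I_sq]; simp
    calc (C γ * X) ^ p + (X ^ p - 1) ^ 2 + (C Complex.I * (X ^ p + 1)) ^ 2
        = (C γ:ℂ[X]) ^ p * X ^ p + (X ^ p - 1) ^ 2
          + (C Complex.I:ℂ[X]) ^ 2 * (X ^ p + 1) ^ 2 := by ring
      _ = 0 := by rw [hγ', hI]; ring

lemma sol_332' : Sol 3 3 2 := by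
  obtain ⟨s, hs⟩ := IsAlgClosed.exists_pow_nat_eq (-12 : ℂ) (n := 2) (by norm_num)
  obtain ⟨a, ha⟩ := IsAlgClosed.exists_pow_nat_eq (-6 * s : ℂ) (n := 2) (by norm_num)
  have hs0 : s ≠ 0 := by rintro rfl; norm_num at hs
  have ha0 : a ≠ 0 := by rintro rfl; simp at ha; exact hs0 ha
  have hs' : (C s : ℂ[X]) ^ 2 = -12 := by rw [← C_pow, hs, map_neg, map_ofNat]
  have ha' : (C a : ℂ[X]) ^ 2 = -6 * C s := by rw [← C_pow, ha, map_mul, map_neg, map_ofNat]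
  refine ⟨X ^ 4 + C s * X ^ 2 + 1, -(X ^ 4 - C s * X ^ 2 + 1), C a * (X ^ 5 - X),
    ?_, ?_, ?_, ?_, ?_⟩
  · have : (X ^ 4 + C s * X ^ 2 + 1 : ℂ[X]).natDegree = 4 := by compute_degree!
    omega
  · rw [natDegree_neg]
    have : (X ^ 4 - C s * X ^ 2 + 1 : ℂ[X]).natDegree = 4 := by compute_degree!
    omega
  · rw [natDegree_C_mul ha0]
    have : (X ^ 5 - X : ℂ[X]).natDegree = 5 := by compute_degree!
    omega
  · intro d h0 h1 _
    have key : (C s - X ^ 2) * (X ^ 4 + C s * X ^ 2 + 1)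
        - (C s + X ^ 2) * (-(X ^ 4 - C s * X ^ 2 + 1)) = C (2 * s) := by
      rw [C_mul, map_ofNat]; ring
    have hd : d ∣ C (2 * s) := by
      rw [← key]; exact dvd_sub (h0.mul_left _) (h1.mul_left _)
    exact isUnit_of_dvd_unit hd (isUnit_C.2 (by simp [hs0]))
  · linear_combination ((X^5 - X:ℂ[X])^2) * ha' + (2 * C s * X^6) * hs'

lemma sol_432' : Sol 4 3 2 := by
  obtain ⟨g, hg⟩ := IsAlgClosed.exists_pow_nat_eq (108 : ℂ) (n := 4) (by norm_num)
  have hg0 : g ≠ 0 := by rintro rfl; norm_num at hg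
  have hg' : (C g : ℂ[X]) ^ 4 = 108 := by rw [← C_pow, hg, map_ofNat]
  refine ⟨C g * (X ^ 5 - X), -(X ^ 8 + 14 * X ^ 4 + 1),
    X ^ 12 - 33 * X ^ 8 - 33 * X ^ 4 + 1, ?_, ?_, ?_, ?_, ?_⟩
  · rw [natDegree_C_mul hg0]
    have : (X ^ 5 - X : ℂ[X]).natDegree = 5 := by compute_degree!
    omega
  · rw [natDegree_neg]
    have : (X ^ 8 + 14 * X ^ 4 + 1 : ℂ[X]).natDegree = 8 := by compute_degree!
    omega
  · have : (X ^ 12 - 33 * X ^ 8 - 33 * X ^ 4 + 1 : ℂ[X]).natDegree = 12 := by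
      compute_degree!
    omega
  · intro d h0 h1 _
    have key : (15 * X ^ 7 + 209 * X ^ 3) * (C g * (X ^ 5 - X))
        - (C g * (16 - 15 * X ^ 4)) * (-(X ^ 8 + 14 * X ^ 4 + 1)) = C g * 16 := by
      ring
    have hd : d ∣ C g * 16 := by
      rw [← key]; exact dvd_sub (h0.mul_left _) (h1.mul_left _)
    refine isUnit_of_dvd_unit hd ?_
    rw [show (C g * 16 : ℂ[X]) = C (g * 16) by rw [C_mul, map_ofNat]]
    exact isUnit_C.2 (by simp [hg0])
  · linear_combination ((X ^ 5 - X : ℂ[X]) ^ 4) * hg'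

lemma sol_532' : Sol 5 3 2 := by
  obtain ⟨g, hg⟩ := IsAlgClosed.exists_pow_nat_eq (1728 : ℂ) (n := 5) (by norm_num)
  have hg0 : g ≠ 0 := by rintro rfl; norm_num at hg
  have hg' : (C g : ℂ[X]) ^ 5 = 1728 := by rw [← C_pow, hg, map_ofNat]
  have hI : (C Complex.I : ℂ[X]) ^ 2 = -1 := by rw [← C_pow, Complex.I_sq]; simp
  refine ⟨C g * (X ^ 11 + 11 * X ^ 6 - X),
    X ^ 20 - 228 * X ^ 15 + 494 * X ^ 10 + 228 * X ^ 5 + 1,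
    C Complex.I * (X ^ 30 + 522 * X ^ 25 - 10005 * X ^ 20 - 10005 * X ^ 10
      - 522 * X ^ 5 + 1), ?_, ?_, ?_, ?_, ?_⟩
  · rw [natDegree_C_mul hg0]
    have : (X ^ 11 + 11 * X ^ 6 - X : ℂ[X]).natDegree = 11 := by compute_degree!
    omega
  · have : (X ^ 20 - 228 * X ^ 15 + 494 * X ^ 10 + 228 * X ^ 5 + 1 : ℂ[X]).natDegree
        = 20 := by compute_degree!
    omega
  · rw [natDegree_C_mul Complex.I_ne_zero]
    have : (X ^ 30 + 522 * X ^ 25 - 10005 * X ^ 20 - 10005 * X ^ 10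
        - 522 * X ^ 5 + 1 : ℂ[X]).natDegree = 30 := by compute_degree!
    omega
  · intro d h0 h1 _
    have key : (3003 * X ^ 19 - 684695 * X ^ 14 + 1485989 * X ^ 9 + 679478 * X ^ 4)
          * (C g * (X ^ 11 + 11 * X ^ 6 - X))
        + (C g * (3125 - 33022 * X ^ 5 - 3003 * X ^ 10))
          * (X ^ 20 - 228 * X ^ 15 + 494 * X ^ 10 + 228 * X ^ 5 + 1)
        = C g * 3125 := by ring
    have hd : d ∣ C g * 3125 := by
      rw [← key]; exact dvd_add (h0.mul_left _) (h1.mul_left _)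
    refine isUnit_of_dvd_unit hd ?_
    rw [show (C g * 3125 : ℂ[X]) = C (g * 3125) by rw [C_mul, map_ofNat]]
    exact isUnit_C.2 (by simp [hg0])
  · linear_combination ((X ^ 11 + 11 * X ^ 6 - X : ℂ[X]) ^ 5) * hg'
      + ((X ^ 30 + 522 * X ^ 25 - 10005 * X ^ 20 - 10005 * X ^ 10
        - 522 * X ^ 5 + 1 : ℂ[X]) ^ 2) * hI

lemma Sol.swap01 {p q r : ℕ} (h : Sol p q r) : Sol q p r := by
  obtain ⟨z0, z1, z2, h0, h1, h2, hc, he⟩ := h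
  exact ⟨z1, z0, z2, h1, h0, h2, fun d d1 d0 d2 => hc d d0 d1 d2,
    by linear_combination he⟩

lemma Sol.swap12 {p q r : ℕ} (h : Sol p q r) : Sol p r q := by
  obtain ⟨z0, z1, z2, h0, h1, h2, hc, he⟩ := h
  exact ⟨z0, z2, z1, h0, h2, h1, fun d d0 d2 d1 => hc d d0 d1 d2,
    by linear_combination he⟩

lemma auxOneDivLe {a : ℕ} {b : ℚ} (hb : 0 < b) (h : b ≤ (a:ℚ)) : (1:ℚ)/a ≤ 1/b :=
  one_div_le_one_div_of_le hb h

lemma sol_main (p q r : ℕ) (hr2 : 2 ≤ r) (hrq : r ≤ q) (hqp : q ≤ p)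
    (h : (1 : ℚ) / p + 1 / q + 1 / r > 1) : Sol p q r := by
  have hq2 : 2 ≤ q := le_trans hr2 hrq
  have hp2 : 2 ≤ p := le_trans hq2 hqp
  have hr : r = 2 := by
    by_contra h'
    have h1 : (1:ℚ)/p ≤ 1/3 := auxOneDivLe (by norm_num) (by exact_mod_cast by omega)
    have h2 : (1:ℚ)/q ≤ 1/3 := auxOneDivLe (by norm_num) (by exact_mod_cast by omega)
    have h3 : (1:ℚ)/r ≤ 1/3 := auxOneDivLe (by norm_num) (by exact_mod_cast by omega)
    linarith
  subst hr
  have hq3 : q ≤ 3 := by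
    by_contra h'
    have h1 : (1:ℚ)/p ≤ 1/4 := auxOneDivLe (by norm_num) (by exact_mod_cast by omega)
    have h2 : (1:ℚ)/q ≤ 1/4 := auxOneDivLe (by norm_num) (by exact_mod_cast by omega)
    push_cast at h; linarith
  interval_cases q
  · exact sol_p22 p (by omega)
  · have hp5 : p ≤ 5 := by
      by_contra h'
      have h1 : (1:ℚ)/p ≤ 1/6 := auxOneDivLe (by norm_num) (by exact_mod_cast by omega)
      push_cast at h; linarith
    interval_cases p
    · exact sol_332'
    · exact sol_432'
    · exact sol_532'

/-- Schwartz's theorem: for every platonic triple `(p,q,r)` with `p,q,r ≥ 2`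
there exist coprime nonconstant polynomials `z0, z1, z2` over `ℂ` with
`z0^p + z1^q + z2^r = 0`. -/
theorem schwartz (p q r : ℕ) (hp : 2 ≤ p) (hq : 2 ≤ q) (hr : 2 ≤ r)
    (hplatonic : (1 : ℚ) / p + 1 / q + 1 / r > 1) :
    ∃ z0 z1 z2 : ℂ[X],
      0 < z0.natDegree ∧ 0 < z1.natDegree ∧ 0 < z2.natDegree ∧
      (∀ d : ℂ[X], d ∣ z0 → d ∣ z1 → d ∣ z2 → IsUnit d) ∧
      z0 ^ p + z1 ^ q + z2 ^ r = 0 := by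
  suffices h : Sol p q r by exact h
  rcases le_total p q with hpq | hpq <;> rcases le_total q r with hqr | hqr <;>
    rcases le_total p r with hpr | hpr
  · exact (((sol_main r q p hp hpq hqr (by linarith)).swap01).swap12).swap01
  · exact sol_main p q r hr (by omega) (by omega) (by linarith)
  · exact ((sol_main q r p hp hpr hqr (by linarith)).swap12).swap01
  · exact (sol_main q p r hr hpr hpq (by linarith)).swap01
  · exact ((sol_main r p q hq hpq hpr (by linarith)).swap01).swap12
  · exact (sol_main p r q hq hqr hpr (by linarith)).swap12
  · exact sol_main p q r hr (by omega) (by omega) (by linarith)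
  · exact sol_main p q r hr hqr hpq (by linarith)
end

section
/- Let p, q, r ≥ 2 be integers such that at least one of them is coprime to the other two. Then there exist polynomials z0, z1, z2 ∈ ℂ[x], not all constant, with z0^p + z1^q + z2^r = 0, such that z0^p is not a constant multiple of z1^q, z0^p is not a constant multiple of z2^r, and z1^q is not a constant multiple of z2^r. -/
open Polynomial

private lemma flip_ne {u v : ℂ[X]} (hv : v ≠ 0) (h : ∀ c : ℂ, u ≠ C c * v) :
    ∀ c : ℂ, v ≠ C c * u := by
  intro c hvc
  rcases eq_or_ne c 0 with rfl | hc
  · rw [map_zero, zero_mul] at hvc; exact hv hvc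
  · exact h c⁻¹ (by rw [hvc, ← mul_assoc, ← C_mul, inv_mul_cancel₀ hc, C_1, one_mul])

private lemma ne_C_mul_of_natDegree_ne {u v : ℂ[X]} (hu : u ≠ 0)
    (hd : u.natDegree ≠ v.natDegree) : ∀ c : ℂ, u ≠ C c * v := by
  intro c h
  rcases eq_or_ne c 0 with rfl | hc
  · rw [map_zero, zero_mul] at h; exact hu h
  · exact hd (by rw [h, natDegree_C_mul hc])

private lemma key (p q r : ℕ) (hp : 2 ≤ p) (hq : 2 ≤ q) (hr : 2 ≤ r)
    (h1 : Nat.Coprime p q) (h2 : Nat.Coprime p r) :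
    ∃ z0 z1 z2 : ℂ[X],
      z0.natDegree ≠ 0 ∧ z1.natDegree ≠ 0 ∧ z2.natDegree ≠ 0 ∧
      z0 ^ p + z1 ^ q + z2 ^ r = 0 ∧
      (∀ c : ℂ, z0 ^ p ≠ C c * z1 ^ q) ∧ (∀ c : ℂ, z1 ^ q ≠ C c * z0 ^ p) ∧
      (∀ c : ℂ, z0 ^ p ≠ C c * z2 ^ r) ∧ (∀ c : ℂ, z2 ^ r ≠ C c * z0 ^ p) ∧
      (∀ c : ℂ, z1 ^ q ≠ C c * z2 ^ r) ∧ (∀ c : ℂ, z2 ^ r ≠ C c * z1 ^ q) := by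
  have hp0 : p ≠ 0 := by omega
  have hq0 : q ≠ 0 := by omega
  obtain ⟨B, hBp, hBqr⟩ := Nat.chineseRemainder (h1.mul_right h2) (p - 1) 0
  have hdp : p ∣ B + 1 := by
    have h' : B + 1 ≡ (p - 1) + 1 [MOD p] := hBp.add_right 1
    rw [Nat.sub_add_cancel (by omega)] at h'
    have h'' : B + 1 ≡ 0 [MOD p] := h'.trans (Nat.modEq_zero_iff_dvd.mpr dvd_rfl)
    exact Nat.modEq_zero_iff_dvd.mp h''
  have hdq : q ∣ B := dvd_trans (dvd_mul_right q r) (Nat.modEq_zero_iff_dvd.mp hBqr)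
  have hdr : r ∣ B := dvd_trans (dvd_mul_left r q) (Nat.modEq_zero_iff_dvd.mp hBqr)
  obtain ⟨w, hw⟩ := IsAlgClosed.exists_pow_nat_eq (-1 : ℂ) (show 0 < p by omega)
  have hw0 : w ≠ 0 := by
    intro h; rw [h, zero_pow hp0] at hw; exact absurd hw.symm (by norm_num)
  set s : ℂ[X] := X ^ q + 1 with hs_def
  have hs : s.Monic := by
    have := Polynomial.monic_X_pow_add_C (R := ℂ) 1 hq0
    simpa [hs_def] using this
  have hsdeg : s.natDegree = q := by
    simpa [hs_def] using Polynomial.natDegree_X_pow_add_C (n := q) (r := (1 : ℂ))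
  have hMon : ∀ n k : ℕ, ((X : ℂ[X]) ^ n * s ^ k).Monic := fun n k =>
    (monic_X_pow n).mul (hs.pow k)
  have hdeg : ∀ n k : ℕ, ((X : ℂ[X]) ^ n * s ^ k).natDegree = n + k * q := by
    intro n k
    rw [(monic_X_pow n).natDegree_mul (hs.pow k), natDegree_X_pow, natDegree_pow, hsdeg]
  have hne : ∀ n k : ℕ, ((X : ℂ[X]) ^ n * s ^ k) ≠ 0 := fun n k => (hMon n k).ne_zero
  set m0 := (B + 1) / p with hm0def
  set m1 := B / q with hm1def
  set m2 := B / r with hm2def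
  have hm0 : m0 * p = B + 1 := Nat.div_mul_cancel hdp
  have hm1 : m1 * q = B := Nat.div_mul_cancel hdq
  have hm2 : m2 * r = B := Nat.div_mul_cancel hdr
  set K := p * q * r with hK
  have eK1 : q * r * p = K := by rw [hK]; ring
  have eK2 : (p * r + 1) * q = K + q := by rw [hK]; ring
  have eK3 : p * q * r = K := rfl
  set z0 : ℂ[X] := C w * (X ^ (q * r) * s ^ m0) with hz0
  set z1 : ℂ[X] := X ^ (p * r + 1) * s ^ m1 with hz1
  set z2 : ℂ[X] := X ^ (p * q) * s ^ m2 with hz2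
  have e0 : z0 ^ p = -(X ^ K * s ^ (B + 1)) := by
    rw [hz0, mul_pow, mul_pow, ← C_pow, hw, ← pow_mul, ← pow_mul, hm0, eK1, map_neg,
      map_one, neg_mul, one_mul]
  have e1 : z1 ^ q = X ^ (K + q) * s ^ B := by
    rw [hz1, mul_pow, ← pow_mul, ← pow_mul, hm1, eK2]
  have e2 : z2 ^ r = X ^ K * s ^ B := by
    rw [hz2, mul_pow, ← pow_mul, ← pow_mul, hm2, eK3]
  have heq : z0 ^ p + z1 ^ q + z2 ^ r = 0 := by
    rw [e0, e1, e2, hs_def]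
    ring
  have d0 : z0.natDegree ≠ 0 := by
    rw [hz0, natDegree_C_mul hw0, hdeg]
    have : 0 < q * r := Nat.mul_pos (by omega) (by omega)
    omega
  have d1 : z1.natDegree ≠ 0 := by
    rw [hz1, hdeg]; omega
  have d2 : z2.natDegree ≠ 0 := by
    rw [hz2, hdeg]
    have : 0 < p * q := Nat.mul_pos (by omega) (by omega)
    omega
  have dz0 : (z0 ^ p).natDegree = K + (B + 1) * q := by rw [e0, natDegree_neg, hdeg]
  have dz1 : (z1 ^ q).natDegree = (K + q) + B * q := by rw [e1, hdeg]
  have dz2 : (z2 ^ r).natDegree = K + B * q := by rw [e2, hdeg]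
  have nz0 : z0 ^ p ≠ 0 := by rw [e0]; exact neg_ne_zero.mpr (hne _ _)
  have nz1 : z1 ^ q ≠ 0 := by rw [e1]; exact hne _ _
  have nz2 : z2 ^ r ≠ 0 := by rw [e2]; exact hne _ _
  have hBq : (B + 1) * q = B * q + q := by ring
  have h02 : ∀ c : ℂ, z0 ^ p ≠ C c * z2 ^ r :=
    ne_C_mul_of_natDegree_ne nz0 (by rw [dz0, dz2]; omega)
  have h20 : ∀ c : ℂ, z2 ^ r ≠ C c * z0 ^ p :=
    ne_C_mul_of_natDegree_ne nz2 (by rw [dz0, dz2]; omega)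
  have h12 : ∀ c : ℂ, z1 ^ q ≠ C c * z2 ^ r :=
    ne_C_mul_of_natDegree_ne nz1 (by rw [dz1, dz2]; omega)
  have h21 : ∀ c : ℂ, z2 ^ r ≠ C c * z1 ^ q :=
    ne_C_mul_of_natDegree_ne nz2 (by rw [dz1, dz2]; omega)
  have coeff0 : (z0 ^ p).coeff K = -1 := by
    rw [e0, coeff_neg]
    have hXc : ((X : ℂ[X]) ^ K * s ^ (B + 1)).coeff K = (s ^ (B + 1)).coeff 0 := by
      simpa using coeff_X_pow_mul (s ^ (B + 1)) K 0
    rw [hXc, coeff_zero_eq_eval_zero]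
    simp [hs_def, zero_pow hq0]
  have coeff1 : (z1 ^ q).coeff K = 0 := by
    rw [e1, X_pow_mul, coeff_mul_X_pow']
    simp [Nat.not_le.mpr (show K < K + q by omega)]
  have h01 : ∀ c : ℂ, z0 ^ p ≠ C c * z1 ^ q := by
    intro c h
    have hcf := congrArg (fun P : ℂ[X] => P.coeff K) h
    simp only [coeff_C_mul, coeff0, coeff1, mul_zero] at hcf
    exact absurd hcf (by norm_num)
  have h10 : ∀ c : ℂ, z1 ^ q ≠ C c * z0 ^ p := flip_ne nz1 h01
  exact ⟨z0, z1, z2, d0, d1, d2, heq, h01, h10, h02, h20, h12, h21⟩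

/-- If one of `p, q, r ≥ 2` is coprime with the other two, the Pham–Brieskorn
equation has a polynomial solution, not all constant, in which no two of the
monomials `z0^p, z1^q, z2^r` are proportional. -/
theorem horizontal_curve_exists_coprime (p q r : ℕ) (hp : 2 ≤ p) (hq : 2 ≤ q) (hr : 2 ≤ r)
    (hcop : (Nat.Coprime p q ∧ Nat.Coprime p r) ∨ (Nat.Coprime q p ∧ Nat.Coprime q r)
            ∨ (Nat.Coprime r p ∧ Nat.Coprime r q)) :
    ∃ z0 z1 z2 : ℂ[X],
      ¬ (z0.natDegree = 0 ∧ z1.natDegree = 0 ∧ z2.natDegree = 0) ∧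
      z0 ^ p + z1 ^ q + z2 ^ r = 0 ∧
      (¬ ∃ c : ℂ, z0 ^ p = C c * z1 ^ q) ∧
      (¬ ∃ c : ℂ, z0 ^ p = C c * z2 ^ r) ∧
      (¬ ∃ c : ℂ, z1 ^ q = C c * z2 ^ r) := by
  rcases hcop with ⟨h1, h2⟩ | ⟨h1, h2⟩ | ⟨h1, h2⟩
  · obtain ⟨z0, z1, z2, d0, d1, d2, heq, h01, h10, h02, h20, h12, h21⟩ :=
      key p q r hp hq hr h1 h2
    exact ⟨z0, z1, z2, fun h => d0 h.1, heq,
      fun ⟨c, hc⟩ => h01 c hc, fun ⟨c, hc⟩ => h02 c hc, fun ⟨c, hc⟩ => h12 c hc⟩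
  · obtain ⟨w0, w1, w2, d0, d1, d2, heq, h01, h10, h02, h20, h12, h21⟩ :=
      key q p r hq hp hr h1 h2
    exact ⟨w1, w0, w2, fun h => d1 h.1, by linear_combination heq,
      fun ⟨c, hc⟩ => h10 c hc, fun ⟨c, hc⟩ => h12 c hc, fun ⟨c, hc⟩ => h02 c hc⟩
  · obtain ⟨w0, w1, w2, d0, d1, d2, heq, h01, h10, h02, h20, h12, h21⟩ :=
      key r p q hr hp hq h1 h2
    exact ⟨w1, w2, w0, fun h => d1 h.1, by linear_combination heq,
      fun ⟨c, hc⟩ => h12 c hc, fun ⟨c, hc⟩ => h10 c hc, fun ⟨c, hc⟩ => h20 c hc⟩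
end
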